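/- Single-source generalization bound: For any μ > 0 and any scoring function f in hypothesis space F, the target error satisfies L_Q(h_f) ≤ L^μ_P(f) + d^μ_f(P, Q) + λ, where λ = min_{g ∈ F} { L^μ_P(g) + L^μ_Q(g) } and d^μ_f(P,Q) = sup_{f' ∈ F} { E_{x∼Q}[W_μ(ω_{f'}(x, h_f(x)))] − E_{x∼P}[W_μ(ω_{f'}(x, h_f(x)))] } is the margin disparity discrepancy. -/

import Mathlib

open MeasureTheory

/-- The ramp loss `W_μ`. -/
noncomputable def ramp (μ v : ℝ) : ℝ :=
  if μ ≤ v then 0 else if v ≤ 0 then 1 else 1 - v / μ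

/-- The margin `ω_f(x,y) = (f(x)(y) - max_{y' ≠ y} f(x)(y'))/2` of a scoring function. -/
noncomputable def margin {X Y : Type*} [Fintype Y] [DecidableEq Y] [Nontrivial Y]
    (f : X → Y → ℝ) (x : X) (y : Y) : ℝ :=
  (f x y - (Finset.univ.erase y).sup'
      (by obtain ⟨b, hb⟩ := exists_ne y
          exact ⟨b, Finset.mem_erase.mpr ⟨hb, Finset.mem_univ b⟩⟩) (f x)) / 2

/-!
Fix `g ∈ F` attaining `λ`. Two margins of the same scoring function at distinct labels sum to
at most `0`, so one of them is nonpositive and has ramp loss `1`; hence pointwise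
`1[h_f x ≠ y] ≤ W(ω_g(x,y)) + W(ω_g(x,h_f x))`. Since `h_f x` maximizes `f x`, `ω_f(x,y) ≤ 0`
unless `y = h_f x`, so also `W(ω_g(x,h_f x)) ≤ W(ω_g(x,y)) + W(ω_f(x,y))`. Integrating the first
inequality against `Q`, the second against `P`, and bounding the difference of the
`W(ω_g(x,h_f x))` terms by the discrepancy `d` gives the bound.
-/

section Ramp

variable {μ : ℝ}

lemma ramp_nonneg (v : ℝ) : 0 ≤ ramp μ v := by
  unfold ramp
  split_ifs with h₁ h₂
  · exact le_rfl
  · exact zero_le_one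
  · rw [not_le] at h₁ h₂
    have : v / μ ≤ 1 := (div_le_one (h₂.trans h₁)).mpr h₁.le
    linarith

lemma ramp_le_one (v : ℝ) : ramp μ v ≤ 1 := by
  unfold ramp
  split_ifs with h₁ h₂
  · exact zero_le_one
  · exact le_rfl
  · rw [not_le] at h₁ h₂
    have : 0 ≤ v / μ := div_nonneg h₂.le (h₂.trans h₁).le
    linarith

lemma ramp_eq_one_of_nonpos (hμ : 0 < μ) {v : ℝ} (hv : v ≤ 0) : ramp μ v = 1 := by
  rw [ramp, if_neg (by linarith), if_pos hv]

lemma one_le_ramp_add_ramp (hμ : 0 < μ) {a b : ℝ} (hab : a + b ≤ 0) :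
    1 ≤ ramp μ a + ramp μ b := by
  rcases le_or_gt a 0 with ha | ha
  · rw [ramp_eq_one_of_nonpos hμ ha]
    linarith [ramp_nonneg (μ := μ) b]
  · rw [ramp_eq_one_of_nonpos hμ (by linarith : b ≤ 0)]
    linarith [ramp_nonneg (μ := μ) a]

end Ramp

section Margin

variable {X Y : Type*} [Fintype Y] [DecidableEq Y] [Nontrivial Y]

lemma margin_le_of_ne (f : X → Y → ℝ) (x : X) {y y' : Y} (h : y' ≠ y) :
    margin f x y ≤ (f x y - f x y') / 2 := by
  have := Finset.le_sup' (f x) (Finset.mem_erase.mpr ⟨h, Finset.mem_univ y'⟩)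
  unfold margin
  linarith

lemma margin_add_margin_nonpos (f : X → Y → ℝ) (x : X) {y y' : Y} (h : y' ≠ y) :
    margin f x y + margin f x y' ≤ 0 := by
  linarith [margin_le_of_ne f x h, margin_le_of_ne f x h.symm]

lemma margin_nonpos_of_le {f : X → Y → ℝ} {x : X} {y y' : Y} (h : y' ≠ y)
    (hle : f x y ≤ f x y') : margin f x y ≤ 0 := by
  linarith [margin_le_of_ne f x h]

variable {μ : ℝ}

lemma indicator_ne_le_ramp_margin_add (hμ : 0 < μ) (g : X → Y → ℝ) (x : X) (y y' : Y) :
    (if y' ≠ y then (1 : ℝ) else 0) ≤ ramp μ (margin g x y) + ramp μ (margin g x y') := by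
  split_ifs with h
  · exact one_le_ramp_add_ramp hμ (margin_add_margin_nonpos g x h)
  · exact add_nonneg (ramp_nonneg _) (ramp_nonneg _)

lemma ramp_margin_le_of_le (hμ : 0 < μ) (f g : X → Y → ℝ) {x : X} {y y' : Y}
    (hle : f x y ≤ f x y') :
    ramp μ (margin g x y') ≤ ramp μ (margin g x y) + ramp μ (margin f x y) := by
  rcases eq_or_ne y' y with rfl | h
  · linarith [ramp_nonneg (μ := μ) (margin f x y')]
  · rw [ramp_eq_one_of_nonpos hμ (margin_nonpos_of_le h hle)]
    linarith [ramp_le_one (μ := μ) (margin g x y'), ramp_nonneg (μ := μ) (margin g x y)]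

end Margin

theorem single_source_bound_general {X Y : Type*} [MeasurableSpace X] [MeasurableSpace Y]
    [Fintype Y] [DecidableEq Y] [Nontrivial Y]
    (P Q : Measure (X × Y))
    (μ : ℝ) (hμ : 0 < μ)
    (F : Set (X → Y → ℝ))
    (lab : (X → Y → ℝ) → X → Y)
    (hlab : ∀ (g : X → Y → ℝ) (x : X) (y : Y), g x y ≤ g x (lab g x))
    (f : X → Y → ℝ) (hfF : f ∈ F)
    (lam : ℝ)
    (hlam : IsLeast {v : ℝ | ∃ g ∈ F,
      v = (∫ z, ramp μ (margin g z.1 z.2) ∂P) + ∫ z, ramp μ (margin g z.1 z.2) ∂Q} lam)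
    (d : ℝ)
    (hd : IsLUB {v : ℝ | ∃ f' ∈ F,
      v = (∫ z, ramp μ (margin f' z.1 (lab f z.1)) ∂Q)
        - ∫ z, ramp μ (margin f' z.1 (lab f z.1)) ∂P} d)
    (hint : ∀ g ∈ F,
      Integrable (fun z : X × Y => ramp μ (margin g z.1 (lab f z.1))) P ∧
      Integrable (fun z : X × Y => ramp μ (margin g z.1 (lab f z.1))) Q ∧
      Integrable (fun z : X × Y => ramp μ (margin g z.1 z.2)) P ∧
      Integrable (fun z : X × Y => ramp μ (margin g z.1 z.2)) Q) :
    (∫ z, (if lab f z.1 ≠ z.2 then (1 : ℝ) else 0) ∂Q)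
      ≤ (∫ z, ramp μ (margin f z.1 z.2) ∂P) + d + lam := by
  obtain ⟨g, hgF, rfl⟩ := hlam.1
  obtain ⟨hgP, hgQ, hgP', hgQ'⟩ := hint g hgF
  have hfP' := (hint f hfF).2.2.1
  have error_le : (∫ z, (if lab f z.1 ≠ z.2 then (1 : ℝ) else 0) ∂Q)
      ≤ (∫ z, ramp μ (margin g z.1 z.2) ∂Q) + ∫ z, ramp μ (margin g z.1 (lab f z.1)) ∂Q := by
    rw [← integral_add hgQ' hgQ]
    refine integral_mono_of_nonneg (.of_forall fun z => ?_) (hgQ'.add hgQ)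
      (.of_forall fun z => indicator_ne_le_ramp_margin_add hμ g z.1 z.2 (lab f z.1))
    positivity
  have disparity_le : (∫ z, ramp μ (margin g z.1 (lab f z.1)) ∂Q)
      - ∫ z, ramp μ (margin g z.1 (lab f z.1)) ∂P ≤ d :=
    hd.1 ⟨g, hgF, rfl⟩
  have source_le : (∫ z, ramp μ (margin g z.1 (lab f z.1)) ∂P)
      ≤ (∫ z, ramp μ (margin g z.1 z.2) ∂P) + ∫ z, ramp μ (margin f z.1 z.2) ∂P := by
    rw [← integral_add hgP' hfP']
    exact integral_mono hgP (hgP'.add hfP') fun z => ramp_margin_le_of_le hμ f g (hlab f z.1 z.2)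
  linarith

/-- Single-source generalization bound:
`L_Q(h_f) ≤ L^μ_P(f) + d^μ_f(P, Q) + λ`, where `λ` is the ideal combined margin loss over the
hypothesis space `F` and `d` is the margin disparity discrepancy (a supremum over `F`).
`lab g` is the labeling function induced by the scoring function `g` (an argmax of `g x`). -/
theorem single_source_bound {X Y : Type*} [MeasurableSpace X] [MeasurableSpace Y]
    [Fintype Y] [DecidableEq Y] [Nontrivial Y]
    (P Q : Measure (X × Y)) [IsProbabilityMeasure P] [IsProbabilityMeasure Q]
    (μ : ℝ) (hμ : 0 < μ)
    (F : Set (X → Y → ℝ)) (hF : F.Nonempty)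
    (lab : (X → Y → ℝ) → X → Y)
    (hlab : ∀ (g : X → Y → ℝ) (x : X) (y : Y), g x y ≤ g x (lab g x))
    (f : X → Y → ℝ) (hfF : f ∈ F)
    (lam : ℝ)
    (hlam : IsLeast {v : ℝ | ∃ g ∈ F,
      v = (∫ z, ramp μ (margin g z.1 z.2) ∂P) + ∫ z, ramp μ (margin g z.1 z.2) ∂Q} lam)
    (d : ℝ)
    (hd : IsLUB {v : ℝ | ∃ f' ∈ F,
      v = (∫ z, ramp μ (margin f' z.1 (lab f z.1)) ∂Q)
        - ∫ z, ramp μ (margin f' z.1 (lab f z.1)) ∂P} d)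
    (hint : ∀ g ∈ F,
      Integrable (fun z : X × Y => ramp μ (margin g z.1 (lab f z.1))) P ∧
      Integrable (fun z : X × Y => ramp μ (margin g z.1 (lab f z.1))) Q ∧
      Integrable (fun z : X × Y => ramp μ (margin g z.1 z.2)) P ∧
      Integrable (fun z : X × Y => ramp μ (margin g z.1 z.2)) Q)
    (hind : Integrable (fun z : X × Y => if lab f z.1 ≠ z.2 then (1 : ℝ) else 0) Q) :
    (∫ z, (if lab f z.1 ≠ z.2 then (1 : ℝ) else 0) ∂Q)
      ≤ (∫ z, ramp μ (margin f z.1 z.2) ∂P) + d + lam :=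
  single_source_bound_general P Q μ hμ F lab hlab f hfF lam hlam d hd hint
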